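/- Let $-1<\alpha<0$, $T>0$, and let $v\in \mathcal C^1([0,T])$. Then $\lim_{t\downarrow 0}\; \omega_{\alpha+2}(t)^{-1}\int_0^t v(s)\,\mathcal B_\alpha v(s)\,ds \;=\; v(0)^2$, where $\omega_{\alpha+2}(t)=t^{\alpha+1}/\Gamma(\alpha+2)$. -/

import Mathlib

/-!
Substituting `r = τ u` gives `∫₀^τ (τ - r)^α v r dr = τ^(α+1) Ψ(τ)` with
`Ψ(τ) = ∫₀¹ (1 - u)^α v(τ u) du`, and differentiating under the integral sign,
`Γ(α+1) 𝓑_α v(s) = s^α P(s)` with `P = (α+1) Ψ + s Ψ₁`, `Ψ₁(τ) = ∫₀¹ (1 - u)^α u v'(τ u) du`.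
So `v 𝓑_α v = s^α g(s) / Γ(α+1)` with `g = v P` continuous on `[0,T]` and `g(0) = v(0)²`.
The weighted mean `(α+1) t^-(α+1) ∫₀ᵗ s^α g(s) ds` tends to `g(0)`: rescaled to `[0,1]` it is
again an integral of the form `∫₀¹ k(u) g(t u) du`, continuous in `t`.
-/

open Real intervalIntegral Set Filter MeasureTheory Topology

noncomputable def scaledIntegral (k g : ℝ → ℝ) (x : ℝ) : ℝ := ∫ u in (0:ℝ)..1, k u * g (x * u)

lemma mul_mem_Icc_of_mem_unitInterval {T x u : ℝ} (hx : x ∈ Icc 0 T) (hu : u ∈ Icc (0:ℝ) 1) :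
    x * u ∈ Icc 0 T :=
  ⟨mul_nonneg hx.1 hu.1, mul_le_of_le_one_right hx.1 hu.2 |>.trans hx.2⟩

section

variable {T : ℝ} {k g : ℝ → ℝ}

lemma continuousOn_comp_mul {x : ℝ} (hg : ContinuousOn g (Icc 0 T)) (hx : x ∈ Icc 0 T) :
    ContinuousOn (fun u => g (x * u)) (Icc 0 1) :=
  hg.comp (continuous_const_mul x).continuousOn fun _ hu => mul_mem_Icc_of_mem_unitInterval hx hu

lemma continuousOn_scaledIntegral (hk : IntervalIntegrable k volume 0 1)
    (hg : ContinuousOn g (Icc 0 T)) : ContinuousOn (scaledIntegral k g) (Icc 0 T) := by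
  obtain ⟨C, hC⟩ := isCompact_Icc.exists_bound_of_continuousOn hg
  intro x₀ hx₀
  refine continuousWithinAt_of_dominated_interval (bound := fun u => ‖k u‖ * C) ?_ ?_
    (hk.norm.mul_const C) ?_
  · filter_upwards [self_mem_nhdsWithin] with x hx
    refine (hk.mul_continuousOn ?_).aestronglyMeasurable_restrict_uIoc
    rw [uIcc_of_le zero_le_one]
    exact continuousOn_comp_mul hg hx
  · filter_upwards [self_mem_nhdsWithin] with x hx
    refine ae_of_all _ fun u hu => ?_
    rw [uIoc_of_le zero_le_one] at hu
    rw [norm_mul]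
    exact mul_le_mul_of_nonneg_left
      (hC _ (mul_mem_Icc_of_mem_unitInterval hx (Ioc_subset_Icc_self hu))) (norm_nonneg _)
  · refine ae_of_all _ fun u hu => ?_
    rw [uIoc_of_le zero_le_one] at hu
    have hu' := Ioc_subset_Icc_self hu
    exact continuousWithinAt_const.mul <| (hg _ (mul_mem_Icc_of_mem_unitInterval hx₀ hu')).comp
      (f := fun x => x * u) (continuous_mul_const u).continuousWithinAt
      fun x hx => mul_mem_Icc_of_mem_unitInterval hx hu'

lemma scaledIntegral_zero : scaledIntegral k g 0 = (∫ u in (0:ℝ)..1, k u) * g 0 := by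
  simp [scaledIntegral, intervalIntegral.integral_mul_const]

lemma hasDerivAt_scaledIntegral {g' : ℝ → ℝ} (hk : IntervalIntegrable k volume 0 1)
    (hg : ∀ x ∈ Icc 0 T, HasDerivAt g (g' x) x) (hg' : ContinuousOn g' (Icc 0 T))
    {x₀ : ℝ} (hx₀ : x₀ ∈ Ioo 0 T) :
    HasDerivAt (scaledIntegral k g) (scaledIntegral (fun u => k u * u) g' x₀) x₀ := by
  have hgc : ContinuousOn g (Icc 0 T) := fun x hx => (hg x hx).continuousAt.continuousWithinAt
  obtain ⟨M, hM⟩ := isCompact_Icc.exists_bound_of_continuousOn hg'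
  have hmeas : ∀ {κ h : ℝ → ℝ}, IntervalIntegrable κ volume 0 1 →
      ContinuousOn h (Icc 0 T) → ∀ x ∈ Icc 0 T,
      AEStronglyMeasurable (fun u => κ u * h (x * u)) (volume.restrict (uIoc 0 1)) :=
    fun hκ hh x hx => (hκ.mul_continuousOn (by
      rw [uIcc_of_le zero_le_one]; exact continuousOn_comp_mul hh hx)).aestronglyMeasurable_restrict_uIoc
  refine (hasDerivAt_integral_of_dominated_loc_of_deriv_le (bound := fun u => ‖k u‖ * M)
    (F' := fun x u => k u * u * g' (x * u)) (isOpen_Ioo.mem_nhds hx₀) ?_ ?_ ?_ ?_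
    (hk.norm.mul_const M) ?_).2
  · filter_upwards [isOpen_Ioo.mem_nhds hx₀] with x hx
    exact hmeas hk hgc x (Ioo_subset_Icc_self hx)
  · exact hk.mul_continuousOn (by
      rw [uIcc_of_le zero_le_one]; exact continuousOn_comp_mul hgc (Ioo_subset_Icc_self hx₀))
  · exact hmeas (hk.mul_continuousOn continuousOn_id) hg' x₀ (Ioo_subset_Icc_self hx₀)
  · refine ae_of_all _ fun u hu x hx => ?_
    rw [uIoc_of_le zero_le_one] at hu
    have hu' := Ioc_subset_Icc_self hu
    calc ‖k u * u * g' (x * u)‖ = ‖k u‖ * u * ‖g' (x * u)‖ := by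
          rw [norm_mul, norm_mul, Real.norm_of_nonneg hu.1.le]
      _ ≤ ‖k u‖ * 1 * M := by
          gcongr
          · exact hu.2
          · exact hM _ (mul_mem_Icc_of_mem_unitInterval (Ioo_subset_Icc_self hx) hu')
      _ = ‖k u‖ * M := by rw [mul_one]
  · refine ae_of_all _ fun u hu x hx => ?_
    rw [uIoc_of_le zero_le_one] at hu
    have hxu := mul_mem_Icc_of_mem_unitInterval (Ioo_subset_Icc_self hx) (Ioc_subset_Icc_self hu)
    exact (((hg _ hxu).comp x ((hasDerivAt_id x).mul_const u)).const_mul (k u)).congr_deriv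
      (by ring)

lemma integral_mul_eq_rpow_mul_scaledIntegral {α t : ℝ} (ht : 0 < t) {K : ℝ → ℝ}
    (hK : ∀ u ∈ Icc (0:ℝ) 1, K (t * u) = t ^ α * k u) :
    ∫ s in (0:ℝ)..t, K s * g s = t ^ (α + 1) * scaledIntegral k g t := by
  have hscale := mul_integral_comp_mul_left (a := 0) (b := 1) (f := fun s => K s * g s) t
  rw [mul_zero, mul_one] at hscale
  rw [← hscale, scaledIntegral, rpow_add_one ht.ne', mul_comm (t ^ α), mul_assoc,
    ← intervalIntegral.integral_const_mul (t ^ α)]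
  congr 1
  refine intervalIntegral.integral_congr fun u hu => ?_
  rw [uIcc_of_le zero_le_one] at hu
  simp only [hK u hu, mul_assoc]

lemma tendsto_integral_rpow_mul_div {α : ℝ} (hα : -1 < α) (hT : 0 < T)
    (hg : ContinuousOn g (Icc 0 T)) :
    Tendsto (fun t => (t ^ (α + 1))⁻¹ * ∫ s in (0:ℝ)..t, s ^ α * g s) (𝓝[>] 0)
      (𝓝 (g 0 / (α + 1))) := by
  have hcont : Tendsto (scaledIntegral (· ^ α) g) (𝓝[Icc 0 T] 0)
      (𝓝 (scaledIntegral (· ^ α) g 0)) :=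
    continuousOn_scaledIntegral (intervalIntegrable_rpow' hα) hg 0 (left_mem_Icc.2 hT.le)
  rw [scaledIntegral_zero, integral_rpow (Or.inl hα), one_rpow,
    zero_rpow (by linarith : α + 1 ≠ 0), sub_zero, one_div_mul_eq_div] at hcont
  rw [← nhdsWithin_Ioo_eq_nhdsGT hT]
  refine (hcont.mono_left (nhdsWithin_mono _ Ioo_subset_Icc_self)).congr' ?_
  filter_upwards [self_mem_nhdsWithin] with t ht
  rw [integral_mul_eq_rpow_mul_scaledIntegral ht.1 fun u hu => mul_rpow ht.1.le hu.1,
    inv_mul_cancel_left₀ (rpow_pos_of_pos ht.1 _).ne']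

end

lemma intervalIntegrable_one_sub_rpow {α : ℝ} (hα : -1 < α) :
    IntervalIntegrable (fun u : ℝ => (1 - u) ^ α) volume 0 1 := by
  simpa using ((intervalIntegrable_rpow' (a := 0) (b := 1) hα).comp_sub_left 1).symm

noncomputable def rlDerivProfile (α : ℝ) (v v' : ℝ → ℝ) (s : ℝ) : ℝ :=
  (α + 1) * scaledIntegral (fun u => (1 - u) ^ α) v s
    + s * scaledIntegral (fun u => (1 - u) ^ α * u) v' s

section

variable {α T : ℝ} {v v' : ℝ → ℝ}

lemma rlDerivProfile_zero (hα : -1 < α) : rlDerivProfile α v v' 0 = v 0 := by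
  have hα' : α + 1 ≠ 0 := by linarith
  have hker : ∫ u in (0:ℝ)..1, (1 - u) ^ α = 1 / (α + 1) := by
    simp [integral_comp_sub_left (fun u => u ^ α), integral_rpow (Or.inl hα), zero_rpow hα']
  rw [rlDerivProfile, scaledIntegral_zero, hker, zero_mul, add_zero]
  field_simp

lemma continuousOn_rlDerivProfile (hα : -1 < α) (hv : ContinuousOn v (Icc 0 T))
    (hv' : ContinuousOn v' (Icc 0 T)) : ContinuousOn (rlDerivProfile α v v') (Icc 0 T) := by
  have hk := intervalIntegrable_one_sub_rpow hα
  exact (continuousOn_const.mul (continuousOn_scaledIntegral hk hv)).add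
    (continuousOn_id.mul (continuousOn_scaledIntegral (hk.mul_continuousOn continuousOn_id) hv'))

lemma hasDerivAt_integral_sub_rpow_mul (hα : -1 < α)
    (hv : ∀ s ∈ Icc 0 T, HasDerivAt v (v' s) s) (hv' : ContinuousOn v' (Icc 0 T))
    {s : ℝ} (hs : s ∈ Ioo 0 T) :
    HasDerivAt (fun τ => ∫ r in (0:ℝ)..τ, (τ - r) ^ α * v r)
      (s ^ α * rlDerivProfile α v v' s) s := by
  have hpow : HasDerivAt (fun τ => τ ^ (α + 1)) ((α + 1) * s ^ α) s := by
    simpa using hasDerivAt_rpow_const (p := α + 1) (Or.inl hs.1.ne')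
  have hprod := hpow.mul
    (hasDerivAt_scaledIntegral (intervalIntegrable_one_sub_rpow hα) hv hv' hs)
  refine (hprod.congr_of_eventuallyEq ?_).congr_deriv ?_
  · filter_upwards [lt_mem_nhds hs.1] with τ hτ
    refine integral_mul_eq_rpow_mul_scaledIntegral hτ fun u hu => ?_
    rw [← mul_one_sub, mul_rpow hτ.le (sub_nonneg.2 hu.2)]
  · rw [rlDerivProfile, rpow_add_one hs.1.ne']
    ring

lemma integral_mul_deriv_integral_sub_rpow_div (hα : -1 < α)
    (hv : ∀ s ∈ Icc 0 T, HasDerivAt v (v' s) s) (hv' : ContinuousOn v' (Icc 0 T))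
    (c : ℝ) {t : ℝ} (ht : t ∈ Ioo 0 T) :
    ∫ s in (0:ℝ)..t, v s * deriv (fun τ => ∫ r in (0:ℝ)..τ, ((τ - r) ^ α / c) * v r) s
      = (∫ s in (0:ℝ)..t, s ^ α * (v s * rlDerivProfile α v v' s)) / c := by
  rw [← intervalIntegral.integral_div]
  refine integral_congr_ae (ae_of_all _ fun s hs => ?_)
  rw [uIoc_of_le ht.1.le] at hs
  simp_rw [div_mul_eq_mul_div, intervalIntegral.integral_div]
  rw [((hasDerivAt_integral_sub_rpow_mul hα hv hv' ⟨hs.1, hs.2.trans_lt ht.2⟩).div_const c).deriv]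
  ring

end

theorem stmt_11_general (α T : ℝ) (hα₁ : -1 < α) (hT : 0 < T)
    (v v' : ℝ → ℝ)
    (hv : ∀ s ∈ Set.Icc (0:ℝ) T, HasDerivAt v (v' s) s)
    (hv' : ContinuousOn v' (Set.Icc 0 T)) :
    Filter.Tendsto
      (fun t : ℝ => (t ^ (α + 1) / Real.Gamma (α + 2))⁻¹ *
        ∫ s in (0:ℝ)..t,
          v s * deriv (fun τ => ∫ r in (0:ℝ)..τ, ((τ - r) ^ α / Real.Gamma (α + 1)) * v r) s)
      (nhdsWithin 0 (Set.Ioi 0)) (nhds (v 0 ^ 2)) := by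
  have hα : α + 1 ≠ 0 := by linarith
  have hvc : ContinuousOn v (Icc 0 T) := fun s hs => (hv s hs).continuousAt.continuousWithinAt
  have hlim := (tendsto_integral_rpow_mul_div (g := fun s => v s * rlDerivProfile α v v' s) hα₁
    hT (hvc.mul (continuousOn_rlDerivProfile hα₁ hvc hv'))).const_mul (α + 1)
  rw [mul_div_cancel₀ _ hα, rlDerivProfile_zero hα₁, ← sq] at hlim
  refine hlim.congr' ?_
  rw [← nhdsWithin_Ioo_eq_nhdsGT hT]
  filter_upwards [self_mem_nhdsWithin] with t ht
  have hΓ : Gamma (α + 1) ≠ 0 := (Gamma_pos_of_pos (by linarith)).ne'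
  have htα : t ^ (α + 1) ≠ 0 := (rpow_pos_of_pos ht.1 _).ne'
  rw [integral_mul_deriv_integral_sub_rpow_div hα₁ hv hv' _ ht, show α + 2 = α + 1 + 1 by ring,
    Gamma_add_one hα]
  field_simp

/-- For `-1 < α < 0`, `T > 0` and `v ∈ C¹([0,T])`,
`lim_{t↓0} ω_{α+2}(t)⁻¹ ∫₀ᵗ v 𝓑_α v = v(0)²`, where `ω_{α+2}(t) = t^(α+1)/Γ(α+2)`. -/
theorem stmt_11 (α T : ℝ) (hα₁ : -1 < α) (hα₂ : α < 0) (hT : 0 < T)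
    (v v' : ℝ → ℝ)
    (hv : ∀ s ∈ Set.Icc (0:ℝ) T, HasDerivAt v (v' s) s)
    (hv' : ContinuousOn v' (Set.Icc 0 T)) :
    Filter.Tendsto
      (fun t : ℝ => (t ^ (α + 1) / Real.Gamma (α + 2))⁻¹ *
        ∫ s in (0:ℝ)..t,
          v s * deriv (fun τ => ∫ r in (0:ℝ)..τ, ((τ - r) ^ α / Real.Gamma (α + 1)) * v r) s)
      (nhdsWithin 0 (Set.Ioi 0)) (nhds (v 0 ^ 2)) :=
  stmt_11_general α T hα₁ hT v v' hv hv'
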